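/- For a cube σ in R^d, a point x not in the affine hull of σ, and λ ∈ (0,1), let σ' = λσ + (1−λ)x be the image of σ under the homothety with center x and ratio λ; then the convex hull conv(σ ∪ σ') is combinatorially a prism over σ, hence a combinatorial cube of dimension dim σ + 1. -/

import Mathlib

open Set

/-- A polytope in `ℝⁿ`: the convex hull of a finite set of points. -/
def IsPolytope {n : ℕ} (P : Set (Fin n → ℝ)) : Prop :=
  ∃ V : Finset (Fin n → ℝ), P = convexHull ℝ (V : Set (Fin n → ℝ))

/-- The dimension of a subset of `ℝⁿ` (the dimension of its affine hull). -/
noncomputable def setDim {n : ℕ} (P : Set (Fin n → ℝ)) : ℕ :=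
  Module.finrank ℝ (vectorSpan ℝ P)

/-- The nonempty (exposed) faces of a polytope, including the polytope itself. -/
def facesOf {n : ℕ} (P : Set (Fin n → ℝ)) : Set (Set (Fin n → ℝ)) :=
  {F | IsExposed ℝ P F ∧ F.Nonempty}

/-- Combinatorial equivalence of two polytopes: an inclusion-preserving bijection
between their face lattices. -/
def CombEquiv {m n : ℕ} (P : Set (Fin m → ℝ)) (Q : Set (Fin n → ℝ)) : Prop :=
  ∃ e : facesOf P ≃ facesOf Q, ∀ A B : facesOf P,
    (A : Set (Fin m → ℝ)) ⊆ (B : Set (Fin m → ℝ)) ↔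
      (e A : Set (Fin n → ℝ)) ⊆ (e B : Set (Fin n → ℝ))

/-- The standard unit cube `[0,1]^k`. -/
def unitCube (k : ℕ) : Set (Fin k → ℝ) := Set.univ.pi fun _ => Icc (0 : ℝ) 1

/-- A combinatorial cube: a polytope combinatorially equivalent to some `[0,1]^k`. -/
def IsCube {n : ℕ} (P : Set (Fin n → ℝ)) : Prop := ∃ k, CombEquiv P (unitCube k)

/-- A simplex: the convex hull of an affinely independent finite set. -/
def IsSimplex {n : ℕ} (P : Set (Fin n → ℝ)) : Prop :=
  ∃ V : Finset (Fin n → ℝ), AffineIndependent ℝ (fun v : {x // x ∈ V} => (v : Fin n → ℝ)) ∧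
    P = convexHull ℝ (V : Set (Fin n → ℝ))

/-- The underlying set (geometric realization) of a collection of faces. -/
def underlying {n : ℕ} (X : Set (Set (Fin n → ℝ))) : Set (Fin n → ℝ) := ⋃ P ∈ X, P

/-- A polyhedral complex: a finite collection of nonempty polytopes, closed under
passing to nonempty faces, such that any two members meet in a common face. -/
structure IsComplex {n : ℕ} (X : Set (Set (Fin n → ℝ))) : Prop where
  finite : X.Finite
  poly : ∀ P ∈ X, IsPolytope P
  nonempty : ∀ P ∈ X, P.Nonempty
  down : ∀ P ∈ X, ∀ F, IsExposed ℝ P F → F.Nonempty → F ∈ X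
  inter : ∀ P ∈ X, ∀ Q ∈ X, (P ∩ Q).Nonempty → IsExposed ℝ P (P ∩ Q)

/-- A cubical complex: all faces are combinatorial cubes. -/
def IsCubical {n : ℕ} (X : Set (Set (Fin n → ℝ))) : Prop :=
  IsComplex X ∧ ∀ P ∈ X, IsCube P

/-- A simplicial complex: all faces are simplices. -/
def IsSimplicial {n : ℕ} (X : Set (Set (Fin n → ℝ))) : Prop :=
  IsComplex X ∧ ∀ P ∈ X, IsSimplex P

/-- The faces of dimension `d` of a complex. -/
def facetsIn {n : ℕ} (X : Set (Set (Fin n → ℝ))) (d : ℕ) : Set (Set (Fin n → ℝ)) :=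
  {P ∈ X | setDim P = d}

/-- Isomorphism of polyhedral complexes: an inclusion-preserving bijection of faces. -/
def ComplexIso {m n : ℕ} (X : Set (Set (Fin m → ℝ))) (Y : Set (Set (Fin n → ℝ))) : Prop :=
  ∃ e : X ≃ Y, ∀ A B : X,
    (A : Set (Fin m → ℝ)) ⊆ (B : Set (Fin m → ℝ)) ↔
      (e A : Set (Fin n → ℝ)) ⊆ (e B : Set (Fin n → ℝ))

/-- The boundary complex of the `(d+1)`-cube: its proper nonempty faces. -/
def cubeBoundary (d : ℕ) : Set (Set (Fin (d + 1) → ℝ)) :=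
  {F | IsExposed ℝ (unitCube (d + 1)) F ∧ F.Nonempty ∧ F ≠ unitCube (d + 1)}

/-- The subcomplex of `∂C` complementary to a subcomplex `B`: the closure of the set
of facets of `∂C` not in `B`. -/
def complementIn (d : ℕ) (B : Set (Set (Fin (d + 1) → ℝ))) : Set (Set (Fin (d + 1) → ℝ)) :=
  {F ∈ cubeBoundary d | ∃ G ∈ cubeBoundary d, G ∉ B ∧ setDim G = d ∧ F ⊆ G}

/-- A cubical Pachner move on a `d`-dimensional cubical complex: a full-dimensional
subcomplex isomorphic to a proper nonempty subcomplex `B` of the boundary of a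
`(d+1)`-cube is exchanged for the complementary subcomplex. -/
def PachnerMove (d : ℕ) {n : ℕ} (X X' : Set (Set (Fin n → ℝ))) : Prop :=
  ∃ (B : Set (Set (Fin (d + 1) → ℝ))) (A A' : Set (Set (Fin n → ℝ))),
    B ⊆ cubeBoundary d ∧
    (∀ F ∈ B, ∀ G ∈ cubeBoundary d, G ⊆ F → G ∈ B) ∧
    (∃ F ∈ B, setDim F = d) ∧
    (∃ F ∈ cubeBoundary d, setDim F = d ∧ F ∉ B) ∧
    A ⊆ X ∧ A' ⊆ X' ∧ ComplexIso A B ∧ ComplexIso A' (complementIn d B) ∧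
    X \ A = X' \ A'

/-- Shellability of a relative polyhedral complex `(A, B)` of dimension `d`:
`(A,B)` reduces to `(B,B)` by repeatedly removing a facet `F` whose intersection with
the remainder is shellable of dimension `d - 1`.  In dimension `0` every complex is
shellable. -/
def Shellable {n : ℕ} : ℕ → Set (Set (Fin n → ℝ)) → Set (Set (Fin n → ℝ)) → Prop
  | 0, _, _ => True
  | d + 1, A, B =>
    Relation.ReflTransGen
      (fun P Q => ∃ F ∈ P, F ∉ B ∧ setDim F = d + 1 ∧ Q = P \ {F} ∧
        Shellable d {G | IsExposed ℝ F G ∧ G.Nonempty ∧ G ≠ F ∧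
          G ⊆ underlying (Q ∪ B)} ∅) A B

/-- A cubulation of a topological space `M`: a cubical complex whose underlying
space is homeomorphic to `M`. -/
def IsCubulation {n : ℕ} (X : Set (Set (Fin n → ℝ))) (M : Type*) [TopologicalSpace M] : Prop :=
  IsCubical X ∧ Nonempty (↥(underlying X) ≃ₜ M)

/-- The image of a set under the homothety with center `x` and ratio `l`. -/
def homothetyImg {n : ℕ} (x : Fin n → ℝ) (l : ℝ) (P : Set (Fin n → ℝ)) : Set (Fin n → ℝ) :=
  (fun p => l • p + (1 - l) • x) '' P

/-- The star of a face `τ` in a complex `C`: all faces contained in a face containing `τ`. -/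
def starOf {n : ℕ} (τ : Set (Fin n → ℝ)) (C : Set (Set (Fin n → ℝ))) :
    Set (Set (Fin n → ℝ)) :=
  {σ ∈ C | ∃ ρ ∈ C, τ ⊆ ρ ∧ σ ⊆ ρ}

/-- The cubical stellar subdivision of `C` at the face `τ`, with conepoint `x` in the
relative interior of `τ` and homothety ratio `l`. -/
def cst {n : ℕ} (τ : Set (Fin n → ℝ)) (C : Set (Set (Fin n → ℝ)))
    (x : Fin n → ℝ) (l : ℝ) : Set (Set (Fin n → ℝ)) :=
  {σ ∈ C | ¬ τ ⊆ σ} ∪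
  {P | ∃ σ ∈ starOf τ C, ¬ τ ⊆ σ ∧ P = convexHull ℝ (σ ∪ homothetyImg x l σ)} ∪
  {P | ∃ σ ∈ starOf τ C, P = homothetyImg x l σ}

/-- One cubical stellar subdivision step at an arbitrary face. -/
def cstStep {n : ℕ} (C C' : Set (Set (Fin n → ℝ))) : Prop :=
  ∃ τ ∈ C, ∃ x ∈ intrinsicInterior ℝ τ, ∃ l ∈ Ioo (0 : ℝ) 1, C' = cst τ C x l

/-- `B` refines `A`: same underlying set, and every face of `B` lies in some face of `A`. -/
def Refines {n : ℕ} (B A : Set (Set (Fin n → ℝ))) : Prop :=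
  underlying B = underlying A ∧ ∀ P ∈ B, ∃ Q ∈ A, P ⊆ Q

namespace PrismAux


/-- intervals for each face label -/
def faceI : Fin 3 → Set ℝ := ![{0}, {1}, Icc 0 1]

def rel3 (s t : Fin 3) : Prop := s = t ∨ t = 2

def cubeFace {m : ℕ} (s : Fin m → Fin 3) : Set (Fin m → ℝ) :=
  Set.univ.pi fun i => faceI (s i)

/-- coefficient for exposing functional -/
def cf : Fin 3 → ℝ := ![-1, 1, 0]
/-- max value of cf * y over [0,1] -/
def mx : Fin 3 → ℝ := ![0, 1, 0]

lemma cf_mul_le_mx {a : Fin 3} {y : ℝ} (hy : y ∈ Icc (0:ℝ) 1) : cf a * y ≤ mx a := by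
  fin_cases a <;> simp [cf, mx] <;> linarith [hy.1, hy.2]

lemma cf_mul_eq_mx_iff {a : Fin 3} {y : ℝ} (hy : y ∈ Icc (0:ℝ) 1) :
    cf a * y = mx a ↔ y ∈ faceI a := by
  fin_cases a
  · simp only [cf, mx, faceI]; norm_num
  · simp [cf, mx, faceI]
  · simp [cf, mx, faceI]; exact hy

lemma mx_mem_faceI (a : Fin 3) : mx a ∈ faceI a := by
  fin_cases a <;> simp [mx, faceI]

lemma cubeFace_nonempty {m : ℕ} (s : Fin m → Fin 3) : (cubeFace s).Nonempty :=
  ⟨fun i => mx (s i), fun i _ => mx_mem_faceI (s i)⟩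

lemma faceI_subset_Icc (a : Fin 3) : faceI a ⊆ Icc (0:ℝ) 1 := by
  fin_cases a <;> simp [faceI] <;> norm_num

lemma cubeFace_subset {m : ℕ} (s : Fin m → Fin 3) : cubeFace s ⊆ unitCube m :=
  fun y hy i _ => faceI_subset_Icc (s i) (hy i (mem_univ i))

/-- the exposing functional for a labeled cube face -/
noncomputable def cubeFn {m : ℕ} (s : Fin m → Fin 3) : (Fin m → ℝ) →L[ℝ] ℝ :=
  LinearMap.toContinuousLinearMap (∑ i, cf (s i) • (LinearMap.proj i : (Fin m → ℝ) →ₗ[ℝ] ℝ))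

lemma cubeFn_apply {m : ℕ} (s : Fin m → Fin 3) (y : Fin m → ℝ) :
    cubeFn s y = ∑ i, cf (s i) * y i := by
  simp [cubeFn, LinearMap.sum_apply, smul_eq_mul]

lemma cubeFn_le {m : ℕ} (s : Fin m → Fin 3) {y : Fin m → ℝ} (hy : y ∈ unitCube m) :
    cubeFn s y ≤ ∑ i, mx (s i) := by
  rw [cubeFn_apply]
  exact Finset.sum_le_sum fun i _ => cf_mul_le_mx (hy i (mem_univ i))

lemma cubeFn_eq_iff {m : ℕ} (s : Fin m → Fin 3) {y : Fin m → ℝ} (hy : y ∈ unitCube m) :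
    cubeFn s y = ∑ i, mx (s i) ↔ y ∈ cubeFace s := by
  rw [cubeFn_apply]
  rw [Finset.sum_eq_sum_iff_of_le (fun i _ => cf_mul_le_mx (hy i (mem_univ i)))]
  constructor
  · intro h i _; exact (cf_mul_eq_mx_iff (hy i (mem_univ i))).1 (h i (Finset.mem_univ i))
  · intro h i _; exact (cf_mul_eq_mx_iff (hy i (mem_univ i))).2 (h i (mem_univ i))

lemma cubeFace_eq_expFace {m : ℕ} (s : Fin m → Fin 3) :
    cubeFace s = {y ∈ unitCube m | ∀ z ∈ unitCube m, cubeFn s z ≤ cubeFn s y} := by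
  ext y
  constructor
  · intro hy
    have hy' : y ∈ unitCube m := cubeFace_subset s hy
    refine ⟨hy', fun z hz => ?_⟩
    rw [(cubeFn_eq_iff s hy').2 hy]
    exact cubeFn_le s hz
  · rintro ⟨hy, hmax⟩
    obtain ⟨w, hw⟩ := cubeFace_nonempty s
    have hw' : w ∈ unitCube m := cubeFace_subset s hw
    have : cubeFn s y = ∑ i, mx (s i) :=
      le_antisymm (cubeFn_le s hy) (by rw [← (cubeFn_eq_iff s hw').2 hw]; exact hmax w hw')
    exact (cubeFn_eq_iff s hy).1 this

lemma cubeFace_mem_facesOf {m : ℕ} (s : Fin m → Fin 3) : cubeFace s ∈ facesOf (unitCube m) :=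
  ⟨fun _ => ⟨cubeFn s, cubeFace_eq_expFace s⟩, cubeFace_nonempty s⟩

lemma facesOf_cube_eq {m : ℕ} {F : Set (Fin m → ℝ)} (hF : F ∈ facesOf (unitCube m)) :
    ∃ s : Fin m → Fin 3, F = cubeFace s := by
  obtain ⟨hexp, hne⟩ := hF
  obtain ⟨f, hf⟩ := hexp hne
  set c : Fin m → ℝ := fun i => f (Pi.single i 1) with hc
  refine ⟨fun i => if c i < 0 then 0 else if 0 < c i then 1 else 2, ?_⟩
  have hfy : ∀ y : Fin m → ℝ, f y = ∑ i, c i * y i := by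
    intro y
    have := (f : (Fin m → ℝ) →ₗ[ℝ] ℝ).pi_apply_eq_sum_univ y
    simp only [hc]
    rw [show f y = (f : (Fin m → ℝ) →ₗ[ℝ] ℝ) y from rfl, this]
    refine Finset.sum_congr rfl fun i _ => ?_
    rw [mul_comm, smul_eq_mul]
    have hps : (fun j => if i = j then (1:ℝ) else 0) = Pi.single i 1 := by
      ext j
      rcases eq_or_ne i j with rfl|h
      · simp
      · simp [h, Pi.single_eq_of_ne (Ne.symm h)]
    rw [hps]; rfl
  -- termwise bounds
  have hterm : ∀ (i : Fin m) {t : ℝ}, t ∈ Icc (0:ℝ) 1 → c i * t ≤ max (c i) 0 := by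
    intro i t ht
    rcases le_or_gt (c i) 0 with h | h
    · calc c i * t ≤ 0 := mul_nonpos_of_nonpos_of_nonneg h ht.1
        _ ≤ _ := le_max_right _ _
    · calc c i * t ≤ c i * 1 := by nlinarith [ht.2]
        _ ≤ _ := by simpa using le_max_left (c i) 0
  have hbd : ∀ y ∈ unitCube m, f y ≤ ∑ i, max (c i) 0 := by
    intro y hy
    rw [hfy]
    exact Finset.sum_le_sum fun i _ => hterm i (hy i (mem_univ i))
  have heq : ∀ y ∈ unitCube m,
      (f y = ∑ i, max (c i) 0 ↔ y ∈ cubeFace (fun i => if c i < 0 then 0 else if 0 < c i then 1 else 2)) := by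
    intro y hy
    rw [hfy, Finset.sum_eq_sum_iff_of_le (fun i _ => hterm i (hy i (mem_univ i)))]
    constructor
    · intro h i _
      have h' := h i (Finset.mem_univ i)
      rcases lt_trichotomy (c i) 0 with hlt | he | hgt
      · have : c i * y i = 0 := by rw [h']; exact (max_eq_right hlt.le)
        have : y i = 0 := by
          rcases mul_eq_zero.1 this with h0 | h0
          · exact absurd h0 hlt.ne
          · exact h0
        simp [cubeFace, faceI, hlt, this]
      · simp [cubeFace, faceI, he, lt_irrefl]
        exact hy i (mem_univ i)
      · have : c i * y i = c i := by rw [h']; exact (max_eq_left hgt.le)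
        have : y i = 1 := mul_left_cancel₀ hgt.ne' (by rw [this]; ring)
        simp [cubeFace, faceI, hgt, not_lt.2 hgt.le, this]
    · intro h i _
      have h' := h i (mem_univ i)
      rcases lt_trichotomy (c i) 0 with hlt | he | hgt
      · simp only [hlt, if_pos] at h'
        simp only [faceI] at h'
        norm_num at h'
        rw [h', max_eq_right hlt.le, mul_zero]
      · simp [he, max_eq_right (le_refl (0:ℝ))]
      · simp only [not_lt.2 hgt.le, if_neg, hgt, if_pos] at h'
        simp only [faceI] at h'
        norm_num at h'
        rw [h', max_eq_left hgt.le, mul_one]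
  rw [hf]
  ext y
  constructor
  · rintro ⟨hy, hmax⟩
    rw [← heq y hy]
    obtain ⟨w, hw⟩ := cubeFace_nonempty (fun i => if c i < 0 then 0 else if 0 < c i then 1 else 2)
    have hw' := cubeFace_subset _ hw
    exact le_antisymm (hbd y hy) (by rw [← (heq w hw').2 hw]; exact hmax w hw')
  · intro hy
    have hy' := cubeFace_subset _ hy
    refine ⟨hy', fun z hz => ?_⟩
    rw [(heq y hy').2 hy]
    exact hbd z hz

lemma faceI_subset_iff {a b : Fin 3} : faceI a ⊆ faceI b ↔ rel3 a b := by
  unfold rel3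
  fin_cases a <;> fin_cases b <;> simp [faceI]
  all_goals exact ⟨1/2, by norm_num⟩

lemma cubeFace_subset_iff {m : ℕ} {s t : Fin m → Fin 3} :
    cubeFace s ⊆ cubeFace t ↔ ∀ i, rel3 (s i) (t i) := by
  constructor
  · intro h i
    rw [← faceI_subset_iff]
    intro v hv
    have hmem : (Function.update (fun j => mx (s j)) i v) ∈ cubeFace s := by
      intro j _
      rcases eq_or_ne j i with rfl | hne
      · simpa using hv
      · simpa [Function.update_of_ne hne] using mx_mem_faceI (s j)
    have := h hmem i (mem_univ i)
    simpa using this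
  · intro h y hy i _
    exact (faceI_subset_iff.2 (h i)) (hy i (mem_univ i))

lemma rel3_antisymm {a b : Fin 3} (h1 : rel3 a b) (h2 : rel3 b a) : a = b := by
  rcases h1 with h | h
  · exact h
  · rcases h2 with h' | h'
    · exact h'.symm
    · rw [h, h']




section Prism

variable {n : ℕ} {σ : Set (Fin n → ℝ)} {x : Fin n → ℝ} {r : ℝ}
variable (hσ : IsPolytope σ) (hne : σ.Nonempty)
  (hx : x ∉ (affineSpan ℝ σ : Set (Fin n → ℝ))) (hr : r ∈ Ioo (0 : ℝ) 1)

/-- the homothety as a plain function -/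
def φ (x : Fin n → ℝ) (r : ℝ) : (Fin n → ℝ) → (Fin n → ℝ) := fun p => r • p + (1 - r) • x

lemma φ_eq_homothety : φ x r = ⇑(AffineMap.homothety x r) := by
  funext p
  simp only [φ, AffineMap.homothety_apply, vsub_eq_sub, vadd_eq_add, smul_sub, sub_smul, one_smul]
  abel

lemma homothetyImg_eq (A : Set (Fin n → ℝ)) : homothetyImg x r A = φ x r '' A := rfl

include hr in
lemma φ_injective : Function.Injective (φ x r) := by
  intro p q h
  simp only [φ, add_left_inj] at h
  exact smul_right_injective _ (ne_of_gt hr.1) h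

/-- the prism (frustum) over σ -/
def prism (σ : Set (Fin n → ℝ)) (x : Fin n → ℝ) (r : ℝ) : Set (Fin n → ℝ) :=
  convexHull ℝ (σ ∪ homothetyImg x r σ)

/-- the claimed faces -/
def prismFace (x : Fin n → ℝ) (r : ℝ) (F : Set (Fin n → ℝ)) (s : Fin 3) : Set (Fin n → ℝ) :=
  if s = 0 then F else if s = 1 then φ x r '' F else convexHull ℝ (F ∪ φ x r '' F)

include hσ in
lemma σ_convex : Convex ℝ σ := by
  obtain ⟨V, rfl⟩ := hσ; exact convex_convexHull ℝ _

include hσ in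
lemma σ_compact : IsCompact σ := by
  obtain ⟨V, rfl⟩ := hσ; exact V.finite_toSet.isCompact_convexHull (𝕜 := ℝ)

lemma φ_img_convex {A : Set (Fin n → ℝ)} (hA : Convex ℝ A) : Convex ℝ (φ x r '' A) := by
  rw [φ_eq_homothety]; exact hA.affine_image _

include hne in
lemma prism_eq_join (hconv : Convex ℝ σ) :
    prism σ x r = convexJoin ℝ σ (φ x r '' σ) := by
  rw [prism, homothetyImg_eq]
  exact hconv.convexHull_union (φ_img_convex hconv) hne (hne.image _)

include hne hx in
lemma exists_H : ∃ (h : (Fin n → ℝ) →L[ℝ] ℝ) (d : ℝ),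
    (∀ p ∈ affineSpan ℝ σ, h p = d) ∧ h x = d + 1 := by
  obtain ⟨v0, hv0⟩ := hne
  have hv0' : v0 ∈ affineSpan ℝ σ := subset_affineSpan ℝ σ hv0
  have hxv : x - v0 ∉ (affineSpan ℝ σ).direction := by
    intro h
    apply hx
    have := AffineSubspace.vadd_mem_of_mem_direction h hv0'
    simpa using this
  obtain ⟨f, hf0, hfmap⟩ := Submodule.exists_dual_map_eq_bot_of_notMem hxv inferInstance
  set c := f (x - v0) with hcc
  refine ⟨LinearMap.toContinuousLinearMap (c⁻¹ • f), c⁻¹ * f v0, ?_, ?_⟩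
  · intro p hp
    have hdir : p - v0 ∈ (affineSpan ℝ σ).direction := by
      have := AffineSubspace.vsub_mem_direction hp hv0'
      simpa using this
    have hz : f (p - v0) = 0 := by
      have : f (p - v0) ∈ Submodule.map f (affineSpan ℝ σ).direction :=
        Submodule.mem_map_of_mem hdir
      rw [hfmap] at this
      simpa using this
    rw [map_sub] at hz
    have hpv : f p = f v0 := by linarith
    simp [LinearMap.toContinuousLinearMap, smul_eq_mul, hpv]
  · have hinv : c⁻¹ * c = 1 := inv_mul_cancel₀ hf0
    have hxx : f x = c + f v0 := by rw [hcc, map_sub]; ring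
    simp [LinearMap.toContinuousLinearMap, smul_eq_mul, hxx]
    ring_nf
    nlinarith [hinv]

/-- exposed-face level set of a functional -/
def expF (f : (Fin n → ℝ) →L[ℝ] ℝ) (A : Set (Fin n → ℝ)) : Set (Fin n → ℝ) :=
  {z ∈ A | ∀ w ∈ A, f w ≤ f z}

lemma f_phi (f : (Fin n → ℝ) →L[ℝ] ℝ) (p : Fin n → ℝ) :
    f (φ x r p) = r * f p + (1 - r) * f x := by
  simp [φ, map_add, map_smul, smul_eq_mul]

include hσ hne in
lemma mem_prism_iff {z : Fin n → ℝ} :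
    z ∈ prism σ x r ↔ ∃ a ∈ σ, ∃ b ∈ σ, ∃ u v : ℝ,
      0 ≤ u ∧ 0 ≤ v ∧ u + v = 1 ∧ u • a + v • (φ x r b) = z := by
  rw [prism_eq_join hne (σ_convex hσ), mem_convexJoin]
  constructor
  · rintro ⟨a, ha, b', ⟨b, hb, rfl⟩, u, v, hu, hv, huv, rfl⟩
    exact ⟨a, ha, b, hb, u, v, hu, hv, huv, rfl⟩
  · rintro ⟨a, ha, b, hb, u, v, hu, hv, huv, rfl⟩
    exact ⟨a, ha, φ x r b, ⟨b, hb, rfl⟩, u, v, hu, hv, huv, rfl⟩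

include hσ hne in
lemma σ_subset_prism : σ ⊆ prism σ x r :=
  subset_trans (subset_union_left) (subset_convexHull ℝ _)

include hσ hne in
lemma top_subset_prism : φ x r '' σ ⊆ prism σ x r :=
  subset_trans (subset_union_right) (subset_convexHull ℝ _)

section Classification

variable (f : (Fin n → ℝ) →L[ℝ] ℝ) {p0 : Fin n → ℝ}
  (hp0 : p0 ∈ σ) (hmax : ∀ q ∈ σ, f q ≤ f p0)

lemma comboval (u v : ℝ) (a b : Fin n → ℝ) :
    f (u • a + v • b) = u * f a + v * f b := by
  rw [map_add, map_smul, map_smul]; rfl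

include hr hmax in
lemma phi_le (b : Fin n → ℝ) (hb : b ∈ σ) :
    f (φ x r b) ≤ r * f p0 + (1 - r) * f x := by
  rw [f_phi]
  have := mul_le_mul_of_nonneg_left (hmax b hb) hr.1.le
  linarith

include hσ hne hr hp0 hmax in
lemma bot_face (hfx : f x < f p0) :
    expF f (prism σ x r) = {p ∈ σ | f p = f p0} := by
  have hM' : r * f p0 + (1 - r) * f x < f p0 := by nlinarith [hr.2]
  ext z
  constructor
  · rintro ⟨hz, hmaxz⟩
    obtain ⟨a, ha, b, hb, u, v, hu, hv, huv, rfl⟩ := (mem_prism_iff hσ hne).1 hz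
    have hzval := comboval f u v a (φ x r b)
    have hge : f p0 ≤ f (u • a + v • φ x r b) :=
      hmaxz p0 (σ_subset_prism hσ hne hp0)
    have hbb := phi_le (x := x) hr f hmax b hb
    have h1 : u * f a ≤ u * f p0 := mul_le_mul_of_nonneg_left (hmax a ha) hu
    have h4 : u * f p0 + v * f p0 = f p0 := by rw [← add_mul, huv, one_mul]
    have hv0 : v = 0 := by
      by_contra hv0
      have hvpos : 0 < v := hv.lt_of_ne (Ne.symm hv0)
      have h2 : v * f (φ x r b) ≤ v * (r * f p0 + (1 - r) * f x) :=
        mul_le_mul_of_nonneg_left hbb hv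
      have h3 : v * (r * f p0 + (1 - r) * f x) < v * f p0 :=
        mul_lt_mul_of_pos_left hM' hvpos
      linarith
    have hu1 : u = 1 := by linarith
    have hz1 : u • a + v • φ x r b = a := by rw [hv0, hu1]; simp
    rw [hz1] at hge ⊢
    exact ⟨ha, le_antisymm (hmax a ha) hge⟩
  · rintro ⟨hz, hfz⟩
    refine ⟨σ_subset_prism hσ hne hz, ?_⟩
    intro w hw
    obtain ⟨a, ha, b, hb, u, v, hu, hv, huv, rfl⟩ := (mem_prism_iff hσ hne).1 hw
    have hzval := comboval f u v a (φ x r b)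
    have hbb := phi_le (x := x) hr f hmax b hb
    have h1 : u * f a ≤ u * f p0 := mul_le_mul_of_nonneg_left (hmax a ha) hu
    have h2 : v * f (φ x r b) ≤ v * (r * f p0 + (1 - r) * f x) :=
      mul_le_mul_of_nonneg_left hbb hv
    have h3 : v * (r * f p0 + (1 - r) * f x) ≤ v * f p0 :=
      mul_le_mul_of_nonneg_left hM'.le hv
    have h4 : u * f p0 + v * f p0 = f p0 := by rw [← add_mul, huv, one_mul]
    rw [hzval, hfz]
    linarith

include hσ hne hr hp0 hmax in
lemma top_face (hfx : f p0 < f x) :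
    expF f (prism σ x r) = φ x r '' {p ∈ σ | f p = f p0} := by
  have hM' : f p0 < r * f p0 + (1 - r) * f x := by nlinarith [hr.2]
  set M' := r * f p0 + (1 - r) * f x with hM'def
  ext z
  constructor
  · rintro ⟨hz, hmaxz⟩
    obtain ⟨a, ha, b, hb, u, v, hu, hv, huv, rfl⟩ := (mem_prism_iff hσ hne).1 hz
    have hzval := comboval f u v a (φ x r b)
    have hge : M' ≤ f (u • a + v • φ x r b) := by
      have := hmaxz (φ x r p0) (top_subset_prism hσ hne ⟨p0, hp0, rfl⟩)
      rw [f_phi] at this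
      linarith
    have hbb := phi_le (x := x) hr f hmax b hb
    have h2 : v * f (φ x r b) ≤ v * M' := mul_le_mul_of_nonneg_left hbb hv
    have h4 : u * M' + v * M' = M' := by rw [← add_mul, huv, one_mul]
    have hu0 : u = 0 := by
      by_contra hu0
      have hupos : 0 < u := hu.lt_of_ne (Ne.symm hu0)
      have h1 : u * f a ≤ u * f p0 := mul_le_mul_of_nonneg_left (hmax a ha) hu
      have h3 : u * f p0 < u * M' := mul_lt_mul_of_pos_left hM' hupos
      linarith
    have hv1 : v = 1 := by linarith
    have hz1 : u • a + v • φ x r b = φ x r b := by rw [hu0, hv1]; simp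
    rw [hz1] at hge ⊢
    refine ⟨b, ⟨hb, ?_⟩, rfl⟩
    have hle := hbb
    rw [f_phi] at hge hle
    have hfb : r * f b = r * f p0 := by linarith
    exact mul_left_cancel₀ (ne_of_gt hr.1) hfb
  · rintro ⟨b, ⟨hb, hfb⟩, rfl⟩
    refine ⟨top_subset_prism hσ hne ⟨b, hb, rfl⟩, ?_⟩
    intro w hw
    obtain ⟨a, ha, b', hb', u, v, hu, hv, huv, rfl⟩ := (mem_prism_iff hσ hne).1 hw
    have hzval := comboval f u v a (φ x r b')
    have h1 : u * f a ≤ u * f p0 := mul_le_mul_of_nonneg_left (hmax a ha) hu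
    have h1' : u * f p0 ≤ u * M' := mul_le_mul_of_nonneg_left hM'.le hu
    have h2 : v * f (φ x r b') ≤ v * M' :=
      mul_le_mul_of_nonneg_left (phi_le (x := x) hr f hmax b' hb') hv
    have h4 : u * M' + v * M' = M' := by rw [← add_mul, huv, one_mul]
    have hphib : f (φ x r b) = M' := by rw [f_phi, hfb]
    rw [hzval, hphib]
    linarith

include hσ hne hr hp0 hmax in
lemma side_face (hfx : f x = f p0) :
    expF f (prism σ x r) =
      convexJoin ℝ {p ∈ σ | f p = f p0} (φ x r '' {p ∈ σ | f p = f p0}) := by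
  have htopval : ∀ b : Fin n → ℝ, f (φ x r b) = r * f b + (1 - r) * f p0 := by
    intro b; rw [f_phi, hfx]
  have htopmax : ∀ b ∈ σ, f (φ x r b) ≤ f p0 := by
    intro b hb
    have := phi_le (x := x) hr f hmax b hb
    rw [hfx] at this
    linarith
  have hprismmax : ∀ w ∈ prism σ x r, f w ≤ f p0 := by
    intro w hw
    obtain ⟨a, ha, b, hb, u, v, hu, hv, huv, rfl⟩ := (mem_prism_iff hσ hne).1 hw
    have hzval := comboval f u v a (φ x r b)
    have h1 : u * f a ≤ u * f p0 := mul_le_mul_of_nonneg_left (hmax a ha) hu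
    have h2 : v * f (φ x r b) ≤ v * f p0 := mul_le_mul_of_nonneg_left (htopmax b hb) hv
    have h4 : u * f p0 + v * f p0 = f p0 := by rw [← add_mul, huv, one_mul]
    rw [hzval]
    linarith
  have hbne : ({p ∈ σ | f p = f p0} : Set (Fin n → ℝ)).Nonempty := ⟨p0, hp0, rfl⟩
  ext z
  constructor
  · rintro ⟨hz, hmaxz⟩
    have hfzz : f z = f p0 :=
      le_antisymm (hprismmax z hz) (hmaxz p0 (σ_subset_prism hσ hne hp0))
    obtain ⟨a, ha, b, hb, u, v, hu, hv, huv, rfl⟩ := (mem_prism_iff hσ hne).1 hz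
    have hzval := comboval f u v a (φ x r b)
    rcases eq_or_lt_of_le hu with hu0 | hupos
    · have hv1 : v = 1 := by linarith
      have hz1 : u • a + v • φ x r b = φ x r b := by rw [← hu0, hv1]; simp
      rw [hz1] at hfzz ⊢
      have hfb : f b = f p0 := by
        rw [htopval] at hfzz
        have : r * f b = r * f p0 := by linarith
        exact mul_left_cancel₀ (ne_of_gt hr.1) this
      exact subset_convexJoin_right hbne ⟨b, ⟨hb, hfb⟩, rfl⟩
    · rcases eq_or_lt_of_le hv with hv0 | hvpos
      · have hu1 : u = 1 := by linarith
        have hz1 : u • a + v • φ x r b = a := by rw [← hv0, hu1]; simp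
        rw [hz1] at hfzz ⊢
        exact subset_convexJoin_left (hbne.image _) ⟨ha, hfzz⟩
      · have h1 : u * f a ≤ u * f p0 := mul_le_mul_of_nonneg_left (hmax a ha) hu
        have h2 : v * f (φ x r b) ≤ v * f p0 := mul_le_mul_of_nonneg_left (htopmax b hb) hv
        have h4 : u * f p0 + v * f p0 = f p0 := by rw [← add_mul, huv, one_mul]
        have hfa : f a = f p0 := by
          by_contra hfa
          have hlt : f a < f p0 := lt_of_le_of_ne (hmax a ha) hfa
          have : u * f a < u * f p0 := mul_lt_mul_of_pos_left hlt hupos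
          linarith [hfzz, hzval]
        have hfb : f b = f p0 := by
          have hphib : f (φ x r b) = f p0 := by
            by_contra hfb
            have hlt : f (φ x r b) < f p0 := lt_of_le_of_ne (htopmax b hb) hfb
            have : v * f (φ x r b) < v * f p0 := mul_lt_mul_of_pos_left hlt hvpos
            linarith [hfzz, hzval]
          rw [htopval] at hphib
          have : r * f b = r * f p0 := by linarith
          exact mul_left_cancel₀ (ne_of_gt hr.1) this
        rw [mem_convexJoin]
        exact ⟨a, ⟨ha, hfa⟩, φ x r b, ⟨b, ⟨hb, hfb⟩, rfl⟩, u, v, hu, hv, huv, rfl⟩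
  · intro hz
    rw [mem_convexJoin] at hz
    obtain ⟨a, ⟨ha, hfa⟩, b', ⟨b, ⟨hb, hfb⟩, rfl⟩, u, v, hu, hv, huv, rfl⟩ := hz
    refine ⟨(mem_prism_iff hσ hne).2 ⟨a, ha, b, hb, u, v, hu, hv, huv, rfl⟩, ?_⟩
    intro w hw
    have hzval := comboval f u v a (φ x r b)
    have hphib : f (φ x r b) = f p0 := by rw [htopval, hfb]; ring
    have h4 : u * f p0 + v * f p0 = f p0 := by rw [← add_mul, huv, one_mul]
    have : f (u • a + v • φ x r b) = f p0 := by rw [hzval, hfa, hphib]; linarith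
    rw [this]
    exact hprismmax w hw

end Classification


section Faces

include hσ hne in
lemma facesOf_σ_char {F : Set (Fin n → ℝ)} (hF : F ∈ facesOf σ) :
    ∃ (g : (Fin n → ℝ) →L[ℝ] ℝ) (p0 : Fin n → ℝ), p0 ∈ σ ∧ (∀ q ∈ σ, g q ≤ g p0) ∧
      F = {p ∈ σ | g p = g p0} := by
  obtain ⟨hexp, hFne⟩ := hF
  obtain ⟨g, hgF⟩ := hexp hFne
  obtain ⟨p0, hp0σ, hp0max⟩ :=
    (σ_compact hσ).exists_isMaxOn hne g.continuous.continuousOn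
  refine ⟨g, p0, hp0σ, fun q hq => hp0max hq, ?_⟩
  rw [hgF]
  ext z
  constructor
  · rintro ⟨hz, hall⟩
    exact ⟨hz, le_antisymm (hp0max hz) (hall p0 hp0σ)⟩
  · rintro ⟨hz, heq⟩
    exact ⟨hz, fun w hw => heq ▸ hp0max hw⟩

variable (h : (Fin n → ℝ) →L[ℝ] ℝ) (d : ℝ)
  (hhσ : ∀ p ∈ σ, h p = d) (hhx : h x = d + 1)

include hhσ hhx in
lemma h_top : ∀ p ∈ σ, h (φ x r p) = d + (1 - r) := by
  intro p hp
  rw [f_phi, hhσ p hp, hhx]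
  ring

include hσ hne hr hhσ hhx in
lemma prismFace_mem {F : Set (Fin n → ℝ)} (hF : F ∈ facesOf σ) (s : Fin 3) :
    prismFace x r F s ∈ facesOf (prism σ x r) := by
  obtain ⟨g, p0, hp0, hmax, hFeq⟩ := facesOf_σ_char hσ hne hF
  have hFne := hF.2
  have hFσ : F ⊆ σ := hF.1.subset
  have key : ∀ c : ℝ, ∀ q ∈ σ, (g + c • h) q ≤ (g + c • h) p0 := by
    intro c q hq
    simp only [ContinuousLinearMap.add_apply, ContinuousLinearMap.smul_apply, smul_eq_mul,
      hhσ q hq, hhσ p0 hp0]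
    linarith [hmax q hq]
  have keyF : ∀ c : ℝ, {p ∈ σ | (g + c • h) p = (g + c • h) p0} = F := by
    intro c
    rw [hFeq]
    ext p
    simp only [mem_setOf_eq, ContinuousLinearMap.add_apply, ContinuousLinearMap.smul_apply,
      smul_eq_mul, and_congr_right_iff]
    intro hp
    rw [hhσ p hp, hhσ p0 hp0]
    constructor <;> intro hh <;> linarith
  fin_cases s
  · -- bottom
    set c := g p0 - g x - 1 with hc
    set f := g + c • h with hfdef
    have hfx : f x < f p0 := by
      simp only [hfdef, ContinuousLinearMap.add_apply, ContinuousLinearMap.smul_apply,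
        smul_eq_mul, hhx, hhσ p0 hp0, hc]
      ring_nf
      linarith
    have hface := bot_face hσ hne hr f hp0 (key c) hfx
    rw [keyF c] at hface
    refine ⟨fun _ => ⟨f, ?_⟩, by simpa [prismFace] using hFne⟩
    simpa [prismFace, expF] using hface.symm
  · -- top
    set c := g p0 - g x + 1 with hc
    set f := g + c • h with hfdef
    have hfx : f p0 < f x := by
      simp only [hfdef, ContinuousLinearMap.add_apply, ContinuousLinearMap.smul_apply,
        smul_eq_mul, hhx, hhσ p0 hp0, hc]
      ring_nf
      linarith
    have hface := top_face hσ hne hr f hp0 (key c) hfx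
    rw [keyF c] at hface
    refine ⟨fun _ => ⟨f, ?_⟩, by simpa [prismFace] using hFne.image (φ x r)⟩
    simpa [prismFace, expF] using hface.symm
  · -- side
    set c := g p0 - g x with hc
    set f := g + c • h with hfdef
    have hfx : f x = f p0 := by
      simp only [hfdef, ContinuousLinearMap.add_apply, ContinuousLinearMap.smul_apply,
        smul_eq_mul, hhx, hhσ p0 hp0, hc]
      ring
    have hface := side_face hσ hne hr f hp0 (key c) hfx
    rw [keyF c] at hface
    have hFconv : Convex ℝ F := hF.1.convex (σ_convex hσ)
    have hjoin : convexHull ℝ (F ∪ φ x r '' F) = convexJoin ℝ F (φ x r '' F) :=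
      hFconv.convexHull_union (φ_img_convex hFconv) hFne (hFne.image (φ x r))
    refine ⟨fun _ => ⟨f, ?_⟩, ?_⟩
    · simp only [prismFace]
      norm_num
      rw [hjoin]
      exact hface.symm
    · simp only [prismFace]
      norm_num
      exact hFne

include hσ hne hr in
lemma facesOf_prism_char {G : Set (Fin n → ℝ)} (hG : G ∈ facesOf (prism σ x r)) :
    ∃ F ∈ facesOf σ, ∃ s : Fin 3, G = prismFace x r F s := by
  obtain ⟨hexp, hGne⟩ := hG
  obtain ⟨f, hf⟩ := hexp hGne
  obtain ⟨p0, hp0σ, hp0max⟩ :=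
    (σ_compact hσ).exists_isMaxOn hne f.continuous.continuousOn
  have hmax : ∀ q ∈ σ, f q ≤ f p0 := fun q hq => hp0max hq
  set F := {p ∈ σ | f p = f p0} with hFdef
  have hFface : F ∈ facesOf σ := by
    refine ⟨fun _ => ⟨f, ?_⟩, ⟨p0, hp0σ, rfl⟩⟩
    ext z
    constructor
    · rintro ⟨hz, heq⟩
      exact ⟨hz, fun w hw => heq ▸ hmax w hw⟩
    · rintro ⟨hz, hall⟩
      exact ⟨hz, le_antisymm (hmax z hz) (hall p0 hp0σ)⟩
  have hGf : G = expF f (prism σ x r) := hf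
  rcases lt_trichotomy (f x) (f p0) with hlt | heq | hgt
  · exact ⟨F, hFface, 0, by rw [hGf, bot_face hσ hne hr f hp0σ hmax hlt]; simp [prismFace]; rfl⟩
  · refine ⟨F, hFface, 2, ?_⟩
    rw [hGf, side_face hσ hne hr f hp0σ hmax heq]
    have hFconv : Convex ℝ F := hFface.1.convex (σ_convex hσ)
    have hjoin : convexHull ℝ (F ∪ φ x r '' F) = convexJoin ℝ F (φ x r '' F) :=
      hFconv.convexHull_union (φ_img_convex hFconv) hFface.2 (hFface.2.image (φ x r))
    simp [prismFace, hjoin]; rfl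
  · exact ⟨F, hFface, 1, by rw [hGf, top_face hσ hne hr f hp0σ hmax hgt]; simp [prismFace]; rfl⟩

end Faces

section Order

variable (h : (Fin n → ℝ) →L[ℝ] ℝ) (d : ℝ)
  (hhσ : ∀ p ∈ σ, h p = d) (hhx : h x = d + 1)

include hr hhσ hhx in
lemma not_bot_subset_top {F G : Set (Fin n → ℝ)} (hFne : F.Nonempty) (hFσ : F ⊆ σ)
    (hGσ : G ⊆ σ) : ¬ F ⊆ φ x r '' G := by
  intro hsub
  obtain ⟨p, hp⟩ := hFne
  obtain ⟨q, hq, hpq⟩ := hsub hp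
  have h1 : h p = d := hhσ p (hFσ hp)
  have h2 : h p = d + (1 - r) := by
    rw [← hpq]; exact h_top h d hhσ hhx q (hGσ hq)
  linarith [hr.2]

include hr hhσ hhx in
lemma not_top_subset_bot {F G : Set (Fin n → ℝ)} (hFne : F.Nonempty) (hFσ : F ⊆ σ)
    (hGσ : G ⊆ σ) : ¬ φ x r '' F ⊆ G := by
  intro hsub
  obtain ⟨p, hp⟩ := hFne
  have h1 : h (φ x r p) = d := hhσ _ (hGσ (hsub ⟨p, hp, rfl⟩))
  have h2 : h (φ x r p) = d + (1 - r) := h_top h d hhσ hhx p (hFσ hp)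
  linarith [hr.2]

include hr hhσ hhx in
lemma join_slice_bot {G : Set (Fin n → ℝ)} (hGσ : G ⊆ σ) {z : Fin n → ℝ}
    (hz : z ∈ convexJoin ℝ G (φ x r '' G)) (hzd : h z = d) : z ∈ G := by
  rw [mem_convexJoin] at hz
  obtain ⟨a, ha, b', ⟨b, hb, rfl⟩, u, v, hu, hv, huv, rfl⟩ := hz
  have hval := comboval h u v a (φ x r b)
  rw [hhσ a (hGσ ha), h_top h d hhσ hhx b (hGσ hb)] at hval
  have hud : u * d + v * d = d := by rw [← add_mul, huv, one_mul]
  have hv0 : v * (1 - r) = 0 := by rw [hval] at hzd; linarith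
  have : v = 0 := by
    rcases mul_eq_zero.1 hv0 with h' | h'
    · exact h'
    · linarith [hr.2]
  have hu1 : u = 1 := by linarith
  rw [this, hu1]
  simpa using ha

include hr hhσ hhx in
lemma join_slice_top {G : Set (Fin n → ℝ)} (hGσ : G ⊆ σ) {z : Fin n → ℝ}
    (hz : z ∈ convexJoin ℝ G (φ x r '' G)) (hzd : h z = d + (1 - r)) : z ∈ φ x r '' G := by
  rw [mem_convexJoin] at hz
  obtain ⟨a, ha, b', ⟨b, hb, rfl⟩, u, v, hu, hv, huv, rfl⟩ := hz
  have hval := comboval h u v a (φ x r b)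
  rw [hhσ a (hGσ ha), h_top h d hhσ hhx b (hGσ hb)] at hval
  have hud : u * d + v * d = d := by rw [← add_mul, huv, one_mul]
  have hv1 : v * (1 - r) = 1 - r := by rw [hval] at hzd; linarith
  have : v = 1 := by
    have : (v - 1) * (1 - r) = 0 := by ring_nf; ring_nf at hv1; linarith
    rcases mul_eq_zero.1 this with h' | h'
    · linarith
    · linarith [hr.2]
  have hu0 : u = 0 := by linarith
  rw [this, hu0]
  simpa using ⟨b, hb, rfl⟩

lemma prismFace_zero (F : Set (Fin n → ℝ)) : prismFace x r F 0 = F := by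
  simp [prismFace]

lemma prismFace_one (F : Set (Fin n → ℝ)) : prismFace x r F 1 = φ x r '' F := by
  simp [prismFace]

lemma prismFace_two (F : Set (Fin n → ℝ)) :
    prismFace x r F 2 = convexHull ℝ (F ∪ φ x r '' F) := by
  simp [prismFace]

include hσ hne hr hhσ hhx in
lemma prismFace_subset_iff {F G : Set (Fin n → ℝ)} (hF : F ∈ facesOf σ) (hG : G ∈ facesOf σ)
    (s t : Fin 3) :
    (prismFace x r F s ⊆ prismFace x r G t) ↔ (F ⊆ G ∧ rel3 s t) := by
  have hFne := hF.2
  have hGne := hG.2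
  have hFσ := hF.1.subset
  have hGσ := hG.1.subset
  have hFconv : Convex ℝ F := hF.1.convex (σ_convex hσ)
  have hGconv : Convex ℝ G := hG.1.convex (σ_convex hσ)
  have hjG : convexHull ℝ (G ∪ φ x r '' G) = convexJoin ℝ G (φ x r '' G) :=
    hGconv.convexHull_union (φ_img_convex hGconv) hGne (hGne.image (φ x r))
  have hφinj : Function.Injective (φ x r) := φ_injective (x := x) hr
  have hGsub2 : G ⊆ convexHull ℝ (G ∪ φ x r '' G) :=
    (subset_union_left).trans (subset_convexHull ℝ _)
  have hGsub2' : φ x r '' G ⊆ convexHull ℝ (G ∪ φ x r '' G) :=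
    (subset_union_right).trans (subset_convexHull ℝ _)
  fin_cases s <;> fin_cases t
  · -- (0,0)
    rw [show ((⟨0, by norm_num⟩ : Fin 3)) = 0 from rfl, prismFace_zero, prismFace_zero]
    simp [rel3]
  · -- (0,1)
    rw [show ((⟨0, by norm_num⟩ : Fin 3)) = 0 from rfl,
      show ((⟨1, by norm_num⟩ : Fin 3)) = 1 from rfl, prismFace_zero, prismFace_one]
    constructor
    · intro hsub
      exact absurd hsub (not_bot_subset_top hr h d hhσ hhx hFne hFσ hGσ)
    · rintro ⟨-, h0 | h0⟩ <;> exact absurd h0 (by decide)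
  · -- (0,2)
    rw [show ((⟨0, by norm_num⟩ : Fin 3)) = 0 from rfl,
      show ((⟨2, by norm_num⟩ : Fin 3)) = 2 from rfl, prismFace_zero, prismFace_two]
    constructor
    · intro hsub
      refine ⟨fun p hp => ?_, Or.inr rfl⟩
      exact join_slice_bot hr h d hhσ hhx hGσ (hjG ▸ hsub hp) (hhσ p (hFσ hp))
    · rintro ⟨hsub, -⟩
      exact hsub.trans hGsub2
  · -- (1,0)
    rw [show ((⟨0, by norm_num⟩ : Fin 3)) = 0 from rfl,
      show ((⟨1, by norm_num⟩ : Fin 3)) = 1 from rfl, prismFace_zero, prismFace_one]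
    constructor
    · intro hsub
      exact absurd hsub (not_top_subset_bot hr h d hhσ hhx hFne hFσ hGσ)
    · rintro ⟨-, h0 | h0⟩ <;> exact absurd h0 (by decide)
  · -- (1,1)
    rw [show ((⟨1, by norm_num⟩ : Fin 3)) = 1 from rfl, prismFace_one, prismFace_one]
    rw [Set.image_subset_image_iff hφinj]
    simp [rel3]
  · -- (1,2)
    rw [show ((⟨1, by norm_num⟩ : Fin 3)) = 1 from rfl,
      show ((⟨2, by norm_num⟩ : Fin 3)) = 2 from rfl, prismFace_one, prismFace_two]
    constructor
    · intro hsub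
      refine ⟨?_, Or.inr rfl⟩
      have himg : φ x r '' F ⊆ φ x r '' G := by
        rintro z ⟨p, hp, rfl⟩
        exact join_slice_top hr h d hhσ hhx hGσ (hjG ▸ hsub ⟨p, hp, rfl⟩)
          (h_top h d hhσ hhx p (hFσ hp))
      exact (Set.image_subset_image_iff hφinj).1 himg
    · rintro ⟨hsub, -⟩
      exact (image_mono hsub).trans hGsub2'
  · -- (2,0)
    rw [show ((⟨0, by norm_num⟩ : Fin 3)) = 0 from rfl,
      show ((⟨2, by norm_num⟩ : Fin 3)) = 2 from rfl, prismFace_two, prismFace_zero]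
    constructor
    · intro hsub
      have hcon : φ x r '' F ⊆ G :=
        ((subset_union_right).trans (subset_convexHull ℝ _)).trans hsub
      exact absurd hcon (not_top_subset_bot hr h d hhσ hhx hFne hFσ hGσ)
    · rintro ⟨-, h0 | h0⟩ <;> exact absurd h0 (by decide)
  · -- (2,1)
    rw [show ((⟨1, by norm_num⟩ : Fin 3)) = 1 from rfl,
      show ((⟨2, by norm_num⟩ : Fin 3)) = 2 from rfl, prismFace_two, prismFace_one]
    constructor
    · intro hsub
      have hcon : F ⊆ φ x r '' G :=
        ((subset_union_left).trans (subset_convexHull ℝ _)).trans hsub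
      exact absurd hcon (not_bot_subset_top hr h d hhσ hhx hFne hFσ hGσ)
    · rintro ⟨-, h0 | h0⟩ <;> exact absurd h0 (by decide)
  · -- (2,2)
    rw [show ((⟨2, by norm_num⟩ : Fin 3)) = 2 from rfl, prismFace_two, prismFace_two]
    constructor
    · intro hsub
      refine ⟨fun p hp => ?_, Or.inl rfl⟩
      have hz : p ∈ convexHull ℝ (G ∪ φ x r '' G) :=
        hsub ((subset_union_left).trans (subset_convexHull ℝ _) hp)
      exact join_slice_bot hr h d hhσ hhx hGσ (hjG ▸ hz) (hhσ p (hFσ hp))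
    · rintro ⟨hsub, -⟩
      exact convexHull_mono (union_subset_union hsub (image_mono hsub))

end Order

end Prism




lemma cubeFace_top {m : ℕ} : cubeFace (fun _ => (2 : Fin 3)) = unitCube m := by
  ext y; simp [cubeFace, faceI, unitCube]

noncomputable def cubeEquiv (m : ℕ) : (Fin m → Fin 3) ≃ facesOf (unitCube m) :=
  Equiv.ofBijective (fun s => ⟨cubeFace s, cubeFace_mem_facesOf s⟩)
    ⟨fun s t hst => by
      have h1 : cubeFace s = cubeFace t := congrArg Subtype.val hst
      funext i
      exact rel3_antisymm (cubeFace_subset_iff.1 h1.subset i)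
        (cubeFace_subset_iff.1 h1.superset i),
     fun F => by
      obtain ⟨s, hs⟩ := facesOf_cube_eq F.2
      exact ⟨s, Subtype.ext hs.symm⟩⟩

lemma rel3_cons_iff {k : ℕ} (a b : Fin 3) (s t : Fin k → Fin 3) :
    (∀ i, rel3 (Fin.cons (α := fun _ => Fin 3) a s i) (Fin.cons (α := fun _ => Fin 3) b t i)) ↔
      rel3 a b ∧ ∀ i, rel3 (s i) (t i) := by
  constructor
  · intro hh
    exact ⟨by simpa using hh 0, fun i => by simpa using hh i.succ⟩
  · rintro ⟨h0, hs⟩ i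
    refine Fin.cases ?_ ?_ i
    · simpa using h0
    · intro j; simpa using hs j

end PrismAux

/-- Let `σ ⊆ ℝⁿ` be a polytope combinatorially isomorphic to the
`k`-cube, `x` a point outside the affine hull of `σ`, `λ ∈ (0,1)`, and
`σ' = λσ + (1-λ)x` the homothetic copy of `σ`.  Then `conv(σ ∪ σ')` is combinatorially
a prism over `σ`, i.e. a combinatorial cube of dimension `k + 1`. -/
theorem prism_over_cube_is_cube {n k : ℕ}
    (σ : Set (Fin n → ℝ)) (hσ : IsPolytope σ)
    (hcube : CombEquiv σ (unitCube k))
    (x : Fin n → ℝ) (hx : x ∉ (affineSpan ℝ σ : Set (Fin n → ℝ)))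
    (l : ℝ) (hl : l ∈ Ioo (0 : ℝ) 1) :
    CombEquiv (convexHull ℝ (σ ∪ homothetyImg x l σ)) (unitCube (k + 1)) := by
  classical
  obtain ⟨e, he⟩ := hcube
  have hcubemem : unitCube k ∈ facesOf (unitCube k) := by
    rw [← PrismAux.cubeFace_top]; exact PrismAux.cubeFace_mem_facesOf _
  have hne : σ.Nonempty := by
    have hF := (e.symm ⟨unitCube k, hcubemem⟩).2
    exact hF.2.mono hF.1.subset
  obtain ⟨h, d, hhσ', hhx⟩ := PrismAux.exists_H hne hx
  have hhσ : ∀ p ∈ σ, h p = d := fun p hp => hhσ' p (subset_affineSpan ℝ σ hp)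
  have hbij : Function.Bijective
      (fun Fs : (↥(facesOf σ)) × Fin 3 =>
        (⟨PrismAux.prismFace x l Fs.1.1 Fs.2,
          PrismAux.prismFace_mem hσ hne hl h d hhσ hhx Fs.1.2 Fs.2⟩ :
            facesOf (PrismAux.prism σ x l))) := by
    constructor
    · rintro ⟨F, s⟩ ⟨G, t⟩ hFG
      have h1 : PrismAux.prismFace x l F.1 s = PrismAux.prismFace x l G.1 t :=
        congrArg Subtype.val hFG
      have h2 := (PrismAux.prismFace_subset_iff hσ hne hl h d hhσ hhx F.2 G.2 s t).1 h1.subset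
      have h3 := (PrismAux.prismFace_subset_iff hσ hne hl h d hhσ hhx G.2 F.2 t s).1 h1.superset
      rw [Prod.ext_iff]
      exact ⟨Subtype.ext (subset_antisymm h2.1 h3.1), PrismAux.rel3_antisymm h2.2 h3.2⟩
    · rintro ⟨G, hG⟩
      obtain ⟨F, hF, s, hGF⟩ := PrismAux.facesOf_prism_char hσ hne hl hG
      exact ⟨(⟨F, hF⟩, s), Subtype.ext hGF.symm⟩
  set EJ := Equiv.ofBijective _ hbij with hEJ
  set E := EJ.symm.trans
    (((Equiv.prodCongr (e.trans (PrismAux.cubeEquiv k).symm) (Equiv.refl (Fin 3))).trans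
        (Equiv.prodComm _ _)).trans
      ((Fin.consEquiv (fun _ => Fin 3)).trans (PrismAux.cubeEquiv (k + 1)))) with hE
  refine ⟨E, ?_⟩
  intro A B
  set Fs := EJ.symm A with hFs
  set Gt := EJ.symm B with hGt
  have hA : (A : Set (Fin n → ℝ)) = PrismAux.prismFace x l Fs.1.1 Fs.2 := by
    conv_lhs => rw [← EJ.apply_symm_apply A]
    rfl
  have hB : (B : Set (Fin n → ℝ)) = PrismAux.prismFace x l Gt.1.1 Gt.2 := by
    conv_lhs => rw [← EJ.apply_symm_apply B]
    rfl
  set sF := (PrismAux.cubeEquiv k).symm (e Fs.1) with hsF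
  set sG := (PrismAux.cubeEquiv k).symm (e Gt.1) with hsG
  have heF : (e Fs.1 : Set (Fin k → ℝ)) = PrismAux.cubeFace sF := by
    conv_lhs => rw [← (PrismAux.cubeEquiv k).apply_symm_apply (e Fs.1)]
    rfl
  have heG : (e Gt.1 : Set (Fin k → ℝ)) = PrismAux.cubeFace sG := by
    conv_lhs => rw [← (PrismAux.cubeEquiv k).apply_symm_apply (e Gt.1)]
    rfl
  have hEA : (E A : Set (Fin (k + 1) → ℝ)) = PrismAux.cubeFace (Fin.cons Fs.2 sF) := rfl
  have hEB : (E B : Set (Fin (k + 1) → ℝ)) = PrismAux.cubeFace (Fin.cons Gt.2 sG) := rfl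
  have L : (A : Set (Fin n → ℝ)) ⊆ (B : Set (Fin n → ℝ)) ↔
      ((Fs.1 : Set (Fin n → ℝ)) ⊆ (Gt.1 : Set (Fin n → ℝ)) ∧ PrismAux.rel3 Fs.2 Gt.2) := by
    rw [hA, hB]
    exact PrismAux.prismFace_subset_iff hσ hne hl h d hhσ hhx Fs.1.2 Gt.1.2 Fs.2 Gt.2
  have R : (E A : Set (Fin (k + 1) → ℝ)) ⊆ (E B : Set (Fin (k + 1) → ℝ)) ↔
      (∀ i, PrismAux.rel3 (Fin.cons (α := fun _ => Fin 3) Fs.2 sF i)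
        (Fin.cons (α := fun _ => Fin 3) Gt.2 sG i)) := by
    rw [hEA, hEB]
    exact PrismAux.cubeFace_subset_iff
  have M : ((Fs.1 : Set (Fin n → ℝ)) ⊆ (Gt.1 : Set (Fin n → ℝ)) ∧ PrismAux.rel3 Fs.2 Gt.2) ↔
      (∀ i, PrismAux.rel3 (Fin.cons (α := fun _ => Fin 3) Fs.2 sF i)
        (Fin.cons (α := fun _ => Fin 3) Gt.2 sG i)) := by
    rw [he Fs.1 Gt.1, heF, heG, PrismAux.cubeFace_subset_iff, PrismAux.rel3_cons_iff]
    tauto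
  exact L.trans (M.trans R.symm)
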